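/- For m ≥ 6 and four pairwise distinct components i, j, k, ℓ of {1,...,m}, the number of permutations of {1,...,m} in which j appears exactly two positions after i and simultaneously ℓ appears exactly two positions after k equals [(m-6)(m-5) + 4(m-4)]·(m-4)!. -/
import Mathlib


/-- `directlyBefore a j k`: component `k` occupies the position immediately after `j`
in the permutation `a` (positions → components). -/
def directlyBefore {m : ℕ} (a : Equiv.Perm (Fin m)) (j k : Fin m) : Prop :=
  ∃ s : ℕ, ∃ h : s + 1 < m, a ⟨s, Nat.lt_of_succ_lt h⟩ = j ∧ a ⟨s + 1, h⟩ = k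

/-- `twoAfter a j k`: component `k` appears exactly two positions after `j` in `a`. -/
def twoAfter {m : ℕ} (a : Equiv.Perm (Fin m)) (j k : Fin m) : Prop :=
  ∃ s : ℕ, ∃ h : s + 2 < m, a ⟨s, by omega⟩ = j ∧ a ⟨s + 2, h⟩ = k

lemma Tcard (m : ℕ) (hm : 6 ≤ m) :
    (((Finset.range (m - 2)) ×ˢ (Finset.range (m - 2))).filter
      (fun st : ℕ × ℕ => st.2 ≠ st.1 ∧ st.2 ≠ st.1 + 2 ∧ st.1 ≠ st.2 + 2)).card
    = (m - 6) * (m - 5) + 4 * (m - 4) := by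
  obtain ⟨n, rfl⟩ : ∃ n, m = n + 6 := ⟨m - 6, by omega⟩
  have e2 : n + 6 - 2 = n + 4 := by omega
  have e4 : n + 6 - 4 = n + 2 := by omega
  have e5 : n + 6 - 5 = n + 1 := by omega
  have e6 : n + 6 - 6 = n := by omega
  rw [e2, e5, e6, e4]
  have hbad : ((Finset.range (n + 4)) ×ˢ (Finset.range (n + 4))).filter
        (fun st : ℕ × ℕ => ¬(st.2 ≠ st.1 ∧ st.2 ≠ st.1 + 2 ∧ st.1 ≠ st.2 + 2))
      = ((Finset.range (n + 4)).image (fun s => (s, s)))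
        ∪ ((Finset.range (n + 2)).image (fun s => (s, s + 2)))
        ∪ ((Finset.range (n + 2)).image (fun t => (t + 2, t))) := by
    ext st
    obtain ⟨s, t⟩ := st
    simp only [Finset.mem_filter, Finset.mem_product, Finset.mem_range,
      Finset.mem_union, Finset.mem_image, Prod.mk.injEq, not_and_or, not_not, not_ne_iff]
    constructor
    · rintro ⟨⟨hs, ht⟩, hc⟩
      rcases hc with h | h | h
      · exact Or.inl (Or.inl ⟨s, by omega, rfl, by omega⟩)
      · exact Or.inl (Or.inr ⟨s, by omega, rfl, by omega⟩)
      · exact Or.inr ⟨t, by omega, by omega, rfl⟩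
    · rintro ((⟨x, hx, rfl, rfl⟩ | ⟨x, hx, rfl, rfl⟩) | ⟨x, hx, rfl, rfl⟩)
      · exact ⟨⟨hx, hx⟩, Or.inl rfl⟩
      · exact ⟨⟨by omega, by omega⟩, Or.inr (Or.inl rfl)⟩
      · exact ⟨⟨by omega, by omega⟩, Or.inr (Or.inr rfl)⟩
  have hinj1 : Function.Injective (fun s : ℕ => (s, s)) := fun a b h => congrArg Prod.fst h
  have hinj2 : Function.Injective (fun s : ℕ => (s, s + 2)) := fun a b h => congrArg Prod.fst h
  have hinj3 : Function.Injective (fun t : ℕ => (t + 2, t)) := fun a b h => congrArg Prod.snd h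
  have hd1 : Disjoint ((Finset.range (n + 4)).image (fun s => (s, s)))
      ((Finset.range (n + 2)).image (fun s => (s, s + 2))) := by
    rw [Finset.disjoint_left]
    rintro ⟨a, b⟩ h1 h2
    simp only [Finset.mem_image, Prod.mk.injEq] at h1 h2
    obtain ⟨x, -, rfl, rfl⟩ := h1
    obtain ⟨y, -, rfl, hy⟩ := h2
    omega
  have hd2 : Disjoint (((Finset.range (n + 4)).image (fun s => (s, s)))
        ∪ ((Finset.range (n + 2)).image (fun s => (s, s + 2))))
      ((Finset.range (n + 2)).image (fun t => (t + 2, t))) := by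
    rw [Finset.disjoint_left]
    rintro ⟨a, b⟩ h1 h2
    simp only [Finset.mem_union, Finset.mem_image, Prod.mk.injEq] at h1 h2
    obtain ⟨y, -, hy1, rfl⟩ := h2
    rcases h1 with ⟨x, -, rfl, h⟩ | ⟨x, -, rfl, h⟩ <;> omega
  have hbadcard : (((Finset.range (n + 4)) ×ˢ (Finset.range (n + 4))).filter
      (fun st : ℕ × ℕ => ¬(st.2 ≠ st.1 ∧ st.2 ≠ st.1 + 2 ∧ st.1 ≠ st.2 + 2))).card
      = (n + 4) + ((n + 2) + (n + 2)) := by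
    rw [hbad, Finset.card_union_of_disjoint hd2, Finset.card_union_of_disjoint hd1,
      Finset.card_image_of_injective _ hinj1, Finset.card_image_of_injective _ hinj2,
      Finset.card_image_of_injective _ hinj3, Finset.card_range, Finset.card_range]
    omega
  have hsplit := Finset.card_filter_add_card_filter_not
    (s := (Finset.range (n + 4)) ×ˢ (Finset.range (n + 4)))
    (p := fun st : ℕ × ℕ => st.2 ≠ st.1 ∧ st.2 ≠ st.1 + 2 ∧ st.1 ≠ st.2 + 2)
  rw [hbadcard, Finset.card_product, Finset.card_range] at hsplit
  have hring : (n + 4) * (n + 4) = n * (n + 1) + 4 * (n + 2) + ((n + 4) + ((n + 2) + (n + 2))) := by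
    ring
  linarith [hsplit, hring]

lemma cardPrescribe {m : ℕ} (u v : Fin 4 → Fin m) (hu : Function.Injective u)
    (hv : Function.Injective v) :
    Nat.card {e : Equiv.Perm (Fin m) // ∀ a, e (u a) = v a} = Nat.factorial (m - 4) := by
  classical
  let e₀ : Set.range u ≃ Set.range v := (Equiv.ofInjective u hu).symm.trans (Equiv.ofInjective v hv)
  have he₀ : ∀ a : Fin 4, e₀ ⟨u a, ⟨a, rfl⟩⟩ = ⟨v a, ⟨a, rfl⟩⟩ := by
    intro a
    have h1 : (⟨u a, ⟨a, rfl⟩⟩ : Set.range u) = Equiv.ofInjective u hu a := by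
      rw [Equiv.ofInjective_apply]
    show ((Equiv.ofInjective u hu).symm.trans (Equiv.ofInjective v hv)) ⟨u a, ⟨a, rfl⟩⟩ = _
    rw [Equiv.trans_apply, h1, Equiv.symm_apply_apply, Equiv.ofInjective_apply]
  have key : {e : Equiv.Perm (Fin m) // ∀ a, e (u a) = v a}
      ≃ ((↥(Set.range u)ᶜ) ≃ (↥(Set.range v)ᶜ)) := by
    refine (Equiv.subtypeEquivRight ?_).trans (Equiv.Set.compl e₀)
    intro e
    constructor
    · rintro h ⟨x, a, rfl⟩
      rw [he₀ a]
      exact h a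
    · intro h a
      have := h ⟨u a, ⟨a, rfl⟩⟩
      rw [he₀ a] at this
      exact this
  rw [Nat.card_congr key]
  have hcu : Fintype.card (↥(Set.range u)ᶜ) = m - 4 := by
    rw [Fintype.card_compl_set, Set.card_range_of_injective hu]
    simp
  have hcv : Fintype.card (↥(Set.range v)ᶜ) = m - 4 := by
    rw [Fintype.card_compl_set, Set.card_range_of_injective hv]
    simp
  rw [Nat.card_eq_fintype_card, Fintype.card_equiv
    ((Fintype.equivFinOfCardEq hcu).trans (Fintype.equivFinOfCardEq hcv).symm), hcu]

lemma twoAfter_iff {m : ℕ} (a : Equiv.Perm (Fin m)) (i j : Fin m) :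
    twoAfter a i j ↔ ((a.symm j : Fin m) : ℕ) = ((a.symm i : Fin m) : ℕ) + 2 := by
  constructor
  · rintro ⟨s, h, h1, h2⟩
    have e1 : a.symm i = ⟨s, by omega⟩ := by rw [← h1]; exact a.symm_apply_apply _
    have e2 : a.symm j = ⟨s + 2, h⟩ := by rw [← h2]; exact a.symm_apply_apply _
    rw [e1, e2]
  · intro h
    have hb : ((a.symm i : Fin m) : ℕ) + 2 < m := h ▸ (a.symm j).isLt
    refine ⟨((a.symm i : Fin m) : ℕ), hb, ?_, ?_⟩
    · have : (⟨((a.symm i : Fin m) : ℕ), by omega⟩ : Fin m) = a.symm i := rfl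
      rw [this]; exact a.apply_symm_apply i
    · have : (⟨((a.symm i : Fin m) : ℕ) + 2, hb⟩ : Fin m) = a.symm j := Fin.ext h.symm
      rw [this]; exact a.apply_symm_apply j

theorem stmt_13 (m : ℕ) (hm : 6 ≤ m) (i j k l : Fin m)
    (hij : i ≠ j) (hik : i ≠ k) (hil : i ≠ l) (hjk : j ≠ k) (hjl : j ≠ l) (hkl : k ≠ l) :
    Nat.card {a : Equiv.Perm (Fin m) // twoAfter a i j ∧ twoAfter a k l}
      = ((m - 6) * (m - 5) + 4 * (m - 4)) * Nat.factorial (m - 4) := by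
  classical
  have Tcard := Tcard m hm
  have E1 : {a : Equiv.Perm (Fin m) // twoAfter a i j ∧ twoAfter a k l}
      ≃ {a : Equiv.Perm (Fin m) //
          (((a.symm j : Fin m) : ℕ) = ((a.symm i : Fin m) : ℕ) + 2 ∧
           ((a.symm l : Fin m) : ℕ) = ((a.symm k : Fin m) : ℕ) + 2)} :=
    Equiv.subtypeEquivRight (fun a => by rw [twoAfter_iff, twoAfter_iff])
  have E2 : {a : Equiv.Perm (Fin m) //
          (((a.symm j : Fin m) : ℕ) = ((a.symm i : Fin m) : ℕ) + 2 ∧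
           ((a.symm l : Fin m) : ℕ) = ((a.symm k : Fin m) : ℕ) + 2)}
      ≃ {b : Equiv.Perm (Fin m) //
          (((b j : Fin m) : ℕ) = ((b i : Fin m) : ℕ) + 2 ∧
           ((b l : Fin m) : ℕ) = ((b k : Fin m) : ℕ) + 2)} :=
    { toFun := fun a => ⟨a.1.symm, a.2⟩
      invFun := fun b => ⟨b.1.symm, by rw [Equiv.symm_symm]; exact b.2⟩
      left_inv := fun a => Subtype.ext (Equiv.symm_symm _)
      right_inv := fun b => Subtype.ext (Equiv.symm_symm _) }
  rw [Nat.card_congr (E1.trans E2), Nat.card_eq_fintype_card, Fintype.card_subtype]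
  set T : Finset (ℕ × ℕ) := ((Finset.range (m - 2)) ×ˢ (Finset.range (m - 2))).filter
      (fun st : ℕ × ℕ => st.2 ≠ st.1 ∧ st.2 ≠ st.1 + 2 ∧ st.1 ≠ st.2 + 2) with hT
  set A : Finset (Equiv.Perm (Fin m)) := Finset.univ.filter
      (fun b : Equiv.Perm (Fin m) =>
        ((b j : Fin m) : ℕ) = ((b i : Fin m) : ℕ) + 2 ∧
        ((b l : Fin m) : ℕ) = ((b k : Fin m) : ℕ) + 2) with hA
  have hmemT : ∀ b ∈ A, (((b i : Fin m) : ℕ), ((b k : Fin m) : ℕ)) ∈ T := by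
    intro b hb
    rw [hA, Finset.mem_filter] at hb
    obtain ⟨-, hb1, hb2⟩ := hb
    have h1 : ((b j : Fin m) : ℕ) < m := (b j).isLt
    have h2 : ((b l : Fin m) : ℕ) < m := (b l).isLt
    have d1 : ((b k : Fin m) : ℕ) ≠ ((b i : Fin m) : ℕ) :=
      fun h => hik (b.injective (Fin.ext h).symm)
    have d2 : ((b k : Fin m) : ℕ) ≠ ((b i : Fin m) : ℕ) + 2 := by
      rw [← hb1]; exact fun h => hjk (b.injective (Fin.ext h.symm))
    have d3 : ((b i : Fin m) : ℕ) ≠ ((b k : Fin m) : ℕ) + 2 := by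
      rw [← hb2]; exact fun h => hil (b.injective (Fin.ext h))
    rw [hT, Finset.mem_filter, Finset.mem_product, Finset.mem_range, Finset.mem_range]
    exact ⟨⟨by omega, by omega⟩, d1, d2, d3⟩
  rw [Finset.card_eq_sum_card_fiberwise hmemT]
  have hfiber : ∀ st ∈ T, (A.filter
      (fun b => (((b i : Fin m) : ℕ), ((b k : Fin m) : ℕ)) = st)).card
      = Nat.factorial (m - 4) := by
    rintro ⟨s, t⟩ hst
    rw [hT, Finset.mem_filter, Finset.mem_product, Finset.mem_range, Finset.mem_range] at hst
    obtain ⟨⟨hs, ht⟩, hne1, hne2, hne3⟩ := hst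
    simp only at hne1 hne2 hne3
    have hs2 : s + 2 < m := by omega
    have ht2 : t + 2 < m := by omega
    have hui : Function.Injective (![i, j, k, l] : Fin 4 → Fin m) := by
      intro x y h
      fin_cases x <;> fin_cases y <;>
        simp_all [hij, hik, hil, hjk, hjl, hkl,
          hij.symm, hik.symm, hil.symm, hjk.symm, hjl.symm, hkl.symm]
    have hvi : Function.Injective
        (![⟨s, by omega⟩, ⟨s + 2, hs2⟩, ⟨t, by omega⟩, ⟨t + 2, ht2⟩] : Fin 4 → Fin m) := by
      intro x y h
      have h' := congrArg Fin.val h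
      fin_cases x <;> fin_cases y <;> simp_all <;> omega
    have heq : A.filter (fun b => (((b i : Fin m) : ℕ), ((b k : Fin m) : ℕ)) = (s, t))
        = Finset.univ.filter (fun b : Equiv.Perm (Fin m) =>
            ∀ a, b ((![i, j, k, l] : Fin 4 → Fin m) a)
              = (![⟨s, by omega⟩, ⟨s + 2, hs2⟩, ⟨t, by omega⟩, ⟨t + 2, ht2⟩] : Fin 4 → Fin m) a) := by
      ext b
      rw [hA, Finset.filter_filter, Finset.mem_filter, Finset.mem_filter]
      simp only [Finset.mem_univ, true_and, Prod.mk.injEq]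
      constructor
      · rintro ⟨⟨h1, h2⟩, h3, h4⟩ a
        fin_cases a
        · exact Fin.ext h3
        · exact Fin.ext (by simpa [h3] using h1)
        · exact Fin.ext h4
        · exact Fin.ext (by simpa [h4] using h2)
      · intro h
        have h0 := h 0; have h1 := h 1; have h2 := h 2; have h3 := h 3
        simp only [Matrix.cons_val_zero, Matrix.cons_val_one, Matrix.head_cons,
          Matrix.cons_val_two, Matrix.tail_cons, Matrix.cons_val_three] at h0 h1 h2 h3
        rw [h0, h1, h2, h3]
        exact ⟨⟨rfl, rfl⟩, rfl, rfl⟩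
    rw [heq, ← Fintype.card_subtype, ← Nat.card_eq_fintype_card]
    exact cardPrescribe _ _ hui hvi
  rw [Finset.sum_congr rfl hfiber, Finset.sum_const, smul_eq_mul, Tcard]
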